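/- If φ : Γ1 → Γ2 is a finite harmonic morphism of degree 2 of metric graphs and C ⊂ Γ1 is a loop whose image φ(C) is a tree, then for every point q of φ(C) that is not a 1-valent endpoint of φ(C), the restriction φ|_C has exactly two preimages of q in C, and φ(C) contains no point of valence ≥ 3. -/
import Mathlib


/-- A compact connected metric graph together with its Baker–Norine divisor theory:
divisors are finitely supported `ℤ`-valued functions on points, and `linEquiv` is the
linear-equivalence relation induced by rational functions (continuous piecewise-linear
functions with integer slopes). -/
structure MetricGraph where
  carrier : Type
  [metric : MetricSpace carrier]
  compact : CompactSpace carrier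
  connected : ConnectedSpace carrier
  /-- the genus (first Betti number) of the graph -/
  genus : ℕ
  genus_eq_zero_iff : genus = 0 ↔ ∀ L : Set carrier, ¬ Nonempty (L ≃ₜ Circle)
  genus_eq_one_iff : genus = 1 ↔ ∃! L : Set carrier, Nonempty (L ≃ₜ Circle)
  /-- linear equivalence of divisors -/
  linEquiv : (carrier →₀ ℤ) → (carrier →₀ ℤ) → Prop
  linEquiv_refl : ∀ D, linEquiv D D
  linEquiv_symm : ∀ D E, linEquiv D E → linEquiv E D
  linEquiv_trans : ∀ D E F, linEquiv D E → linEquiv E F → linEquiv D F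
  linEquiv_deg : ∀ D E, linEquiv D E → D.sum (fun _ n => n) = E.sum (fun _ n => n)
  linEquiv_add : ∀ D E F, linEquiv D E → linEquiv (D + F) (E + F)

namespace MetricGraph

variable (G : MetricGraph)

instance : MetricSpace G.carrier := G.metric
instance : MeasurableSpace G.carrier := borel _
instance : BorelSpace G.carrier := ⟨rfl⟩

/-- degree of a divisor -/
def deg (D : G.carrier →₀ ℤ) : ℤ := D.sum fun _ n => n

/-- effectivity of a divisor -/
def Effective (D : G.carrier →₀ ℤ) : Prop := ∀ p, 0 ≤ D p

/-- the complete linear system `|D|` is nonempty -/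
def SysNonempty (D : G.carrier →₀ ℤ) : Prop := ∃ E, G.Effective E ∧ G.linEquiv D E

/-- the Baker–Norine rank of `D` is at least `r` -/
def RankGe (D : G.carrier →₀ ℤ) (r : ℕ) : Prop :=
  ∀ E : G.carrier →₀ ℤ, G.Effective E → G.deg E = (r : ℤ) → G.SysNonempty (D - E)

open Classical in
/-- the Baker–Norine rank of a divisor -/
noncomputable def rank (D : G.carrier →₀ ℤ) : ℤ :=
  if G.SysNonempty D then ((sSup {r : ℕ | G.RankGe D r} : ℕ) : ℤ) else -1

/-- a subset of a metric graph which is a loop (homeomorphic to the circle) -/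
def IsLoopSet (S : Set G.carrier) : Prop := Nonempty (S ≃ₜ Circle)

/-- a subset of a metric graph which is a (nonempty, closed, connected) tree:
it contains no loop -/
def IsTree (S : Set G.carrier) : Prop :=
  S.Nonempty ∧ IsClosed S ∧ IsConnected S ∧ ∀ L ⊆ S, ¬ G.IsLoopSet L

/-- a subgraph of genus one: it contains a unique loop -/
def GenusOneSubset (S : Set G.carrier) : Prop :=
  ∃! L : Set G.carrier, L ⊆ S ∧ G.IsLoopSet L

/-- a very special divisor -/
def VerySpecial (D : G.carrier →₀ ℤ) : Prop :=
  G.rank D > max 0 (G.deg D - (G.genus : ℤ) + 1)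

/-- the Clifford index of a divisor -/
noncomputable def cliffordIdx (D : G.carrier →₀ ℤ) : ℤ := G.deg D - 2 * G.rank D

/-- total length of a subgraph, as its one-dimensional Hausdorff measure -/
noncomputable def len1 (S : Set G.carrier) : ENNReal :=
  MeasureTheory.Measure.hausdorffMeasure 1 S

end MetricGraph

/-- A finite harmonic morphism of degree `d` between metric graphs: a continuous
surjection with positive local degrees at all points, finite fibers, and total local
degree `d` over every point of the target. -/
structure FiniteHarmonicMorphism (G1 G2 : MetricGraph) (d : ℕ) where
  toFun : G1.carrier → G2.carrier
  continuous : Continuous toFun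
  surjective : Function.Surjective toFun
  localDeg : G1.carrier → ℕ
  localDeg_pos : ∀ P, 0 < localDeg P
  fiber_finite : ∀ Q, (toFun ⁻¹' {Q}).Finite
  degree_eq : ∀ Q : G2.carrier, ∑ᶠ P ∈ toFun ⁻¹' {Q}, localDeg P = d

/-- A tropical modification `G'` of a metric graph `G`: `G'` is obtained from `G`
by attaching finitely many trees (closed, possibly infinite, edges) at points of `G`,
so `G` embeds isometrically in `G'` and there is a retraction whose fibers are trees
meeting `G` exactly in the attaching point. -/
structure TropicalModification (G G' : MetricGraph) where
  incl : G.carrier → G'.carrier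
  isometry : Isometry incl
  retract : G'.carrier → G.carrier
  retract_cont : Continuous retract
  retract_incl : ∀ p, retract (incl p) = p
  fiber_tree : ∀ p, G'.IsTree (retract ⁻¹' {p})
  fiber_meet : ∀ p, retract ⁻¹' {p} ∩ Set.range incl = {incl p}
  mod_finite : {p : G.carrier | retract ⁻¹' {p} ≠ {incl p}}.Finite
  genus_eq : G'.genus = G.genus

/-- The theta graph `G₀`: two distinct vertices `v1, v2` joined by three edges of
pairwise distinct positive lengths, each edge parametrized by arc length. -/
structure ThetaGraph extends MetricGraph where
  v1 : carrier
  v2 : carrier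
  v_ne : v1 ≠ v2
  len : Fin 3 → ℝ
  len_pos : ∀ i, 0 < len i
  len_inj : Function.Injective len
  par : Fin 3 → ℝ → carrier
  par_zero : ∀ i, par i 0 = v1
  par_end : ∀ i, par i (len i) = v2
  par_injOn : ∀ i, Set.InjOn (par i) (Set.Icc 0 (len i))
  par_contOn : ∀ i, ContinuousOn (par i) (Set.Icc 0 (len i))
  par_dist_le : ∀ i s t, s ∈ Set.Icc 0 (len i) → t ∈ Set.Icc 0 (len i) →
    dist (par i s) (par i t) ≤ |s - t|
  cover : (⋃ i, par i '' Set.Icc 0 (len i)) = Set.univ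
  inter_ne : ∀ i j, i ≠ j →
    par i '' Set.Ioo 0 (len i) ∩ par j '' Set.Ioo 0 (len j) = ∅
  genus_two : genus = 2

/-- the midpoint of the `i`-th edge of a theta graph -/
noncomputable def ThetaGraph.m (G : ThetaGraph) (i : Fin 3) : G.carrier := G.par i (G.len i / 2)

/-- The metric graph `Gₙ`: obtained from the theta graph `G₀` (sitting inside it as the
subset `G0`) by attaching loops `loop i` at the points `q 0 = m 0, q 1, …, q n`, where
`q 1 ∈ (v1, m 1)` and `q 2 ∈ (v2, m 2)`. -/
structure GnGraph (n : ℕ) extends MetricGraph where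
  G0 : Set carrier
  v1 : carrier
  v2 : carrier
  v_ne : v1 ≠ v2
  len : Fin 3 → ℝ
  len_pos : ∀ i, 0 < len i
  len_inj : Function.Injective len
  par : Fin 3 → ℝ → carrier
  par_zero : ∀ i, par i 0 = v1
  par_end : ∀ i, par i (len i) = v2
  par_injOn : ∀ i, Set.InjOn (par i) (Set.Icc 0 (len i))
  par_contOn : ∀ i, ContinuousOn (par i) (Set.Icc 0 (len i))
  par_dist_le : ∀ i s t, s ∈ Set.Icc 0 (len i) → t ∈ Set.Icc 0 (len i) →
    dist (par i s) (par i t) ≤ |s - t|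
  G0_eq : (⋃ i, par i '' Set.Icc 0 (len i)) = G0
  inter_ne : ∀ i j, i ≠ j →
    par i '' Set.Ioo 0 (len i) ∩ par j '' Set.Ioo 0 (len j) = ∅
  q : ℕ → carrier
  q_mem : ∀ i ≤ n, q i ∈ G0
  q_injOn : Set.InjOn q (Set.Iic n)
  q_zero : q 0 = par 0 (len 0 / 2)
  q_one : 1 ≤ n → ∃ t ∈ Set.Ioo 0 (len 1 / 2), q 1 = par 1 t
  q_two : 2 ≤ n → ∃ t ∈ Set.Ioo (len 2 / 2) (len 2), q 2 = par 2 t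
  loop : ℕ → Set carrier
  loop_isLoop : ∀ i ≤ n, Nonempty (loop i ≃ₜ Circle)
  loop_meet : ∀ i ≤ n, loop i ∩ G0 = {q i}
  loop_disj : ∀ i ≤ n, ∀ j ≤ n, i ≠ j → loop i ∩ loop j = ∅
  cover : G0 ∪ (⋃ i ∈ Set.Iic n, loop i) = Set.univ
  genus_eq : genus = n + 3


section Aux

open Set Real

/-- Every point of the circle other than `x` is `x * exp t` for a unique `t ∈ (0, 2π)`. -/
lemma circle_exists_exp {x z : Circle} (hz : z ≠ x) :
    ∃ t ∈ Set.Ioo (0:ℝ) (2 * π), x * Circle.exp t = z := by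
  set w := x⁻¹ * z with hw_def
  have hw : w ≠ 1 := by
    intro h
    apply hz
    have := congrArg (x * ·) h
    simpa [hw_def, mul_inv_cancel_left] using this
  have harg : Circle.exp (Complex.arg (w : ℂ)) = w := Circle.exp_arg w
  set a := Complex.arg (w : ℂ) with ha_def
  have h1 : -π < a := Complex.neg_pi_lt_arg _
  have h2 : a ≤ π := Complex.arg_le_pi _
  have hπ : 0 < π := Real.pi_pos
  have hxw : x * w = z := by rw [hw_def, mul_inv_cancel_left]
  by_cases h0 : 0 < a
  · exact ⟨a, ⟨h0, by linarith⟩, by rw [harg, hxw]⟩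
  · have ha0 : a ≠ 0 := by
      intro h
      apply hw
      rw [← harg, h, Circle.exp_zero]
    push_neg at h0
    have haneg : a < 0 := lt_of_le_of_ne h0 ha0
    refine ⟨a + 2 * π, ⟨by linarith, by linarith⟩, ?_⟩
    rw [Circle.exp_add_two_pi, harg, hxw]

lemma circle_exp_ne_one {t : ℝ} (ht : t ∈ Set.Ioo (0:ℝ) (2 * π)) : Circle.exp t ≠ 1 := by
  intro h
  obtain ⟨n, hn⟩ := Circle.exp_eq_one.mp h
  have hπ : 0 < π := Real.pi_pos
  have h1 : (0:ℝ) < n * (2 * π) := hn ▸ ht.1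
  have h2 : (n:ℝ) * (2 * π) < 2 * π := hn ▸ ht.2
  have hn0 : (0:ℝ) < n := by nlinarith
  have hn1 : (0:ℤ) < n := by exact_mod_cast hn0
  have : (1:ℝ) ≤ (n:ℝ) := by exact_mod_cast hn1
  nlinarith

lemma circle_exp_injOn : Set.InjOn Circle.exp (Set.Ioo (0:ℝ) (2 * π)) := by
  intro s hs t ht h
  obtain ⟨m, hm⟩ := Circle.exp_eq_exp.mp h
  have hπ : 0 < π := Real.pi_pos
  have hm1 : (m:ℝ) < 1 := by nlinarith [hs.1, hs.2, ht.1, ht.2]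
  have hm2 : (-1:ℝ) < m := by nlinarith [hs.1, hs.2, ht.1, ht.2]
  have : m = 0 := by
    have h1 : m < 1 := by exact_mod_cast hm1
    have h2 : (-1:ℤ) < m := by exact_mod_cast hm2
    omega
  rw [hm, this]
  push_cast
  ring

lemma circle_compl_singleton (x : Circle) :
    ({x}ᶜ : Set Circle) = (fun t => x * Circle.exp t) '' Set.Ioo 0 (2 * π) := by
  ext z
  simp only [Set.mem_compl_iff, Set.mem_singleton_iff, Set.mem_image]
  constructor
  · intro hz
    obtain ⟨t, ht, he⟩ := circle_exists_exp hz
    exact ⟨t, ht, he⟩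
  · rintro ⟨t, ht, rfl⟩ h
    exact circle_exp_ne_one ht (mul_left_cancel ((h.trans (mul_one x).symm)))

lemma circle_compl_singleton_preconnected (x : Circle) :
    IsPreconnected ({x}ᶜ : Set Circle) := by
  rw [circle_compl_singleton x]
  exact isPreconnected_Ioo.image _
    (Continuous.continuousOn (by continuity))

lemma circle_compl_singleton_nonempty (x : Circle) :
    Set.Nonempty ({x}ᶜ : Set Circle) := by
  refine ⟨x * Circle.exp π, fun h => ?_⟩
  have hπ : 0 < π := Real.pi_pos
  exact circle_exp_ne_one ⟨hπ, by linarith⟩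
    (mul_left_cancel ((h.trans (mul_one x).symm)))

/-- The circle minus two (possibly equal) points is the union of two preconnected sets. -/
lemma circle_compl_pair (x y : Circle) :
    ∃ A B : Set Circle, IsPreconnected A ∧ IsPreconnected B ∧
      A ∪ B = ({x, y} : Set Circle)ᶜ := by
  by_cases hxy : y = x
  · refine ⟨{x}ᶜ, {x}ᶜ, circle_compl_singleton_preconnected x,
      circle_compl_singleton_preconnected x, ?_⟩
    rw [Set.union_self, hxy, Set.pair_eq_singleton]
  · obtain ⟨θ, hθ, hθe⟩ := circle_exists_exp hxy
    set f : ℝ → Circle := fun t => x * Circle.exp t with hf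
    have hfc : Continuous f := by continuity
    refine ⟨f '' Set.Ioo 0 θ, f '' Set.Ioo θ (2 * π),
      isPreconnected_Ioo.image _ hfc.continuousOn,
      isPreconnected_Ioo.image _ hfc.continuousOn, ?_⟩
    have hinj : ∀ s ∈ Set.Ioo (0:ℝ) (2*π), f s = y → s = θ := by
      intro s hs hfs
      apply circle_exp_injOn hs hθ
      exact mul_left_cancel (hfs.trans hθe.symm)
    ext z
    simp only [Set.mem_union, Set.mem_image, Set.mem_compl_iff, Set.mem_insert_iff,
      Set.mem_singleton_iff]
    constructor
    · rintro (⟨t, ht, rfl⟩ | ⟨t, ht, rfl⟩)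
      · have ht' : t ∈ Set.Ioo (0:ℝ) (2*π) := ⟨ht.1, ht.2.trans hθ.2⟩
        push_neg
        constructor
        · intro h
          exact circle_exp_ne_one ht' (mul_left_cancel ((h.trans (mul_one x).symm)))
        · intro h
          exact absurd (hinj t ht' h) (ne_of_lt ht.2)
      · have ht' : t ∈ Set.Ioo (0:ℝ) (2*π) := ⟨hθ.1.trans ht.1, ht.2⟩
        push_neg
        constructor
        · intro h
          exact circle_exp_ne_one ht' (mul_left_cancel ((h.trans (mul_one x).symm)))
        · intro h
          exact absurd (hinj t ht' h) (ne_of_gt ht.1)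
    · intro hz
      push_neg at hz
      obtain ⟨t, ht, hte⟩ := circle_exists_exp hz.1
      have htθ : t ≠ θ := by
        intro h
        exact hz.2 (by rw [← hte, h, hθe])
      rcases lt_or_gt_of_ne htθ with h | h
      · exact Or.inl ⟨t, ⟨ht.1, h⟩, hte⟩
      · exact Or.inr ⟨t, ⟨h, ht.2⟩, hte⟩

variable {X : Type*} [TopologicalSpace X]

/-- Two points of `s` lying in a common preconnected subset `A ⊆ s` give the same
connected component of `↥s`. -/
lemma cc_eq_of_mem_preconnected {s A : Set X} (hA : IsPreconnected A) (hAs : A ⊆ s)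
    {x a : ↥s} (hx : (x : X) ∈ A) (ha : (a : X) ∈ A) :
    (x : ConnectedComponents ↥s) = (a : ConnectedComponents ↥s) := by
  have hA' : IsPreconnected ((Subtype.val : ↥s → X) ⁻¹' A) := by
    rw [← Topology.IsInducing.subtypeVal.isPreconnected_image]
    rwa [Subtype.image_preimage_coe, Set.inter_eq_self_of_subset_right hAs]
  rw [ConnectedComponents.coe_eq_coe']
  exact hA'.subset_connectedComponent (Set.mem_preimage.mpr ha) (Set.mem_preimage.mpr hx)

lemma cc_card_le_two {s A B : Set X} (hA : IsPreconnected A) (hB : IsPreconnected B)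
    (hAB : A ∪ B = s) : Nat.card (ConnectedComponents ↥s) ≤ 2 := by
  rcases Set.eq_empty_or_nonempty s with hs | hs
  · have : IsEmpty (ConnectedComponents ↥s) := by
      constructor
      intro c
      obtain ⟨⟨x, hx⟩, -⟩ := ConnectedComponents.surjective_coe c
      rw [hs] at hx
      exact Set.notMem_empty _ hx
    simp [Nat.card_of_isEmpty]
  · have hAs : A ⊆ s := hAB ▸ Set.subset_union_left
    have hBs : B ⊆ s := hAB ▸ Set.subset_union_right
    obtain ⟨z, hz⟩ := hs
    classical
    set a : ↥s := if h : A.Nonempty then ⟨h.choose, hAs h.choose_spec⟩ else ⟨z, hz⟩ with ha_def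
    set b : ↥s := if h : B.Nonempty then ⟨h.choose, hBs h.choose_spec⟩ else ⟨z, hz⟩ with hb_def
    have hsurj : Function.Surjective
        (fun i : Bool => if i then (a : ConnectedComponents ↥s) else b) := by
      intro c
      obtain ⟨x, rfl⟩ := ConnectedComponents.surjective_coe c
      have hx : (x : X) ∈ A ∪ B := hAB ▸ x.2
      rcases hx with hx | hx
      · refine ⟨true, ?_⟩
        have hAne : A.Nonempty := ⟨x, hx⟩
        have ha : (a : X) ∈ A := by rw [ha_def, dif_pos hAne]; exact hAne.choose_spec
        simpa using (cc_eq_of_mem_preconnected hA hAs hx ha).symm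
      · refine ⟨false, ?_⟩
        have hBne : B.Nonempty := ⟨x, hx⟩
        have hb : (b : X) ∈ B := by rw [hb_def, dif_pos hBne]; exact hBne.choose_spec
        simpa using (cc_eq_of_mem_preconnected hB hBs hx hb).symm
    calc Nat.card (ConnectedComponents ↥s) ≤ Nat.card Bool :=
          Nat.card_le_card_of_surjective _ hsurj
      _ = 2 := by simp [Nat.card_eq_fintype_card]

lemma cc_card_eq_one {s : Set X} (h : IsConnected s) :
    Nat.card (ConnectedComponents ↥s) = 1 := by
  haveI : ConnectedSpace ↥s := Subtype.connectedSpace h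
  rw [Nat.card_eq_one_iff_unique]
  constructor
  · constructor
    intro c d
    obtain ⟨x, rfl⟩ := ConnectedComponents.surjective_coe c
    obtain ⟨y, rfl⟩ := ConnectedComponents.surjective_coe d
    rw [ConnectedComponents.coe_eq_coe, PreconnectedSpace.connectedComponent_eq_univ,
      PreconnectedSpace.connectedComponent_eq_univ]
  · obtain ⟨x, hx⟩ := h.nonempty
    exact ⟨ConnectedComponents.mk ⟨x, hx⟩⟩

lemma homeo_symm_image {Y : Type*} [TopologicalSpace Y] (h : X ≃ₜ Y) (S : Set Y) :
    h.symm '' S = h ⁻¹' S := by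
  ext z
  constructor
  · rintro ⟨w, hw, rfl⟩
    simpa using hw
  · intro hz
    exact ⟨h z, hz, h.symm_apply_apply z⟩

end Aux

/-- if a loop `C` of `Γ1` has image a tree under a finite harmonic
morphism of degree 2, then every point of the image which is not a 1-valent endpoint
has exactly two preimages in `C`, and the image has no point of valence ≥ 3.
(Valence of a point `q` of the tree `φ(C)` is counted as the number of connected
components of `φ(C) \ {q}`.) -/
theorem statement12 (G1 G2 : MetricGraph) (φ : FiniteHarmonicMorphism G1 G2 2)
    (C : Set G1.carrier) (hC : G1.IsLoopSet C) (hT : G2.IsTree (φ.toFun '' C)) :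
    (∀ q ∈ φ.toFun '' C,
      Nat.card (ConnectedComponents (↥((φ.toFun '' C) \ {q}))) ≠ 1 →
      (C ∩ φ.toFun ⁻¹' {q}).ncard = 2) ∧
    ∀ q ∈ φ.toFun '' C,
      Nat.card (ConnectedComponents (↥((φ.toFun '' C) \ {q}))) < 3 := by
  classical
  obtain ⟨h⟩ := hC
  set f := φ.toFun with hf_def
  -- the whole fiber of any point has at most 2 elements
  have fiber_le : ∀ q : G2.carrier, (f ⁻¹' {q}).ncard ≤ 2 := by
    intro q
    have hfin := φ.fiber_finite q
    have hdeg := φ.degree_eq q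
    rw [finsum_mem_eq_finite_toFinset_sum _ hfin] at hdeg
    have hcard : hfin.toFinset.card • 1 ≤ ∑ P ∈ hfin.toFinset, φ.localDeg P :=
      Finset.card_nsmul_le_sum _ _ _ (fun x _ => φ.localDeg_pos x)
    rw [Set.ncard_eq_toFinset_card _ hfin]
    simpa [hdeg] using hcard
  have hFsub : ∀ q : G2.carrier, C ∩ f ⁻¹' {q} ⊆ f ⁻¹' {q} := fun q => Set.inter_subset_right
  have hFfin : ∀ q : G2.carrier, (C ∩ f ⁻¹' {q}).Finite :=
    fun q => (φ.fiber_finite q).subset (hFsub q)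
  have hFle : ∀ q : G2.carrier, (C ∩ f ⁻¹' {q}).ncard ≤ 2 :=
    fun q => le_trans (Set.ncard_le_ncard (hFsub q) (φ.fiber_finite q)) (fiber_le q)
  have hFne : ∀ q ∈ f '' C, (C ∩ f ⁻¹' {q}).Nonempty := by
    rintro q ⟨p, hp, rfl⟩; exact ⟨p, hp, rfl⟩
  -- removing the full fiber (within C) from C maps exactly onto the image minus the point
  have himg : ∀ (q : G2.carrier) (P : Set G1.carrier), P = C ∩ f ⁻¹' {q} →
      f '' (C \ P) = (f '' C) \ {q} := by
    intro q P hP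
    ext t
    constructor
    · rintro ⟨c, ⟨hcC, hcP⟩, rfl⟩
      refine ⟨⟨c, hcC, rfl⟩, fun ht => hcP (hP ▸ ⟨hcC, ht⟩)⟩
    · rintro ⟨⟨c, hcC, rfl⟩, hne⟩
      exact ⟨c, ⟨hcC, fun hcP => hne (hP ▸ hcP).2⟩, rfl⟩
  -- description of C minus two points via the circle
  have hCset : ∀ (p1 : G1.carrier) (hp1 : p1 ∈ C) (p2 : G1.carrier) (hp2 : p2 ∈ C),
      Subtype.val '' (h ⁻¹' (({h ⟨p1, hp1⟩, h ⟨p2, hp2⟩} : Set Circle)ᶜ)) = C \ {p1, p2} := by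
    intro p1 hp1 p2 hp2
    ext z
    simp only [Set.mem_image, Set.mem_preimage, Set.mem_compl_iff, Set.mem_insert_iff,
      Set.mem_singleton_iff, Set.mem_diff]
    constructor
    · rintro ⟨⟨w, hw⟩, hwmem, rfl⟩
      push_neg at hwmem
      refine ⟨hw, ?_⟩
      push_neg
      exact ⟨fun he => hwmem.1 (congrArg h (Subtype.ext he)),
        fun he => hwmem.2 (congrArg h (Subtype.ext he))⟩
    · rintro ⟨hz, hzp⟩
      push_neg at hzp
      refine ⟨⟨z, hz⟩, ?_, rfl⟩
      push_neg
      refine ⟨fun he => hzp.1 ?_, fun he => hzp.2 ?_⟩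
      · exact congrArg Subtype.val (h.injective he)
      · exact congrArg Subtype.val (h.injective he)
  -- pushing preconnected subsets of the circle into G1
  have hpre : ∀ S : Set Circle, IsPreconnected S →
      IsPreconnected (Subtype.val '' (h ⁻¹' S)) := by
    intro S hS
    rw [← homeo_symm_image h S]
    exact (hS.image _ h.symm.continuous.continuousOn).image _
      continuous_subtype_val.continuousOn
  -- C minus one point is nonempty
  have hCne : ∀ (p : G1.carrier) (hp : p ∈ C), (C \ {p}).Nonempty := by
    intro p hp
    refine ⟨(h.symm (h ⟨p, hp⟩ * Circle.exp Real.pi) : ↥C), (h.symm _).2, ?_⟩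
    intro he
    have h1 : h.symm (h ⟨p, hp⟩ * Circle.exp Real.pi) = ⟨p, hp⟩ := Subtype.ext he
    have h2 : h ⟨p, hp⟩ * Circle.exp Real.pi = h ⟨p, hp⟩ := by
      conv_rhs => rw [← h1]
      rw [h.apply_symm_apply]
    have hπ : 0 < Real.pi := Real.pi_pos
    exact circle_exp_ne_one ⟨hπ, by linarith⟩
      (mul_left_cancel ((h2.trans (mul_one (h ⟨p, hp⟩)).symm)))
  constructor
  · -- part A
    intro q hq hne
    have h1 : 1 ≤ (C ∩ f ⁻¹' {q}).ncard := (Set.ncard_pos (hFfin q)).mpr (hFne q hq)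
    have h2 := hFle q
    rcases (by omega : (C ∩ f ⁻¹' {q}).ncard = 1 ∨ (C ∩ f ⁻¹' {q}).ncard = 2) with heq | heq
    · exfalso
      apply hne
      obtain ⟨p, hp⟩ := Set.ncard_eq_one.mp heq
      have hpC : p ∈ C := by
        have : p ∈ C ∩ f ⁻¹' {q} := by rw [hp]; exact rfl
        exact this.1
      have hset := hCset p hpC p hpC
      simp only [Set.pair_eq_singleton] at hset
      have hs : (f '' C) \ {q} = f '' (Subtype.val '' (h ⁻¹' (({h ⟨p, hpC⟩} : Set Circle)ᶜ))) := by
        rw [hset, himg q {p} hp.symm]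
      apply cc_card_eq_one
      rw [hs]
      constructor
      · obtain ⟨z, hz⟩ := hCne p hpC
        rw [← hset] at hz
        exact ⟨f z, Set.mem_image_of_mem f hz⟩
      · exact (hpre _ (circle_compl_singleton_preconnected _)).image f
          φ.continuous.continuousOn
    · exact heq
  · -- part B
    intro q hq
    have h1 : 1 ≤ (C ∩ f ⁻¹' {q}).ncard := (Set.ncard_pos (hFfin q)).mpr (hFne q hq)
    have h2 := hFle q
    obtain ⟨p1, p2, hP⟩ : ∃ p1 p2, C ∩ f ⁻¹' {q} = {p1, p2} := by
      rcases (by omega : (C ∩ f ⁻¹' {q}).ncard = 1 ∨ (C ∩ f ⁻¹' {q}).ncard = 2) with heq | heq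
      · obtain ⟨a, ha⟩ := Set.ncard_eq_one.mp heq
        exact ⟨a, a, by rw [ha, Set.pair_eq_singleton]⟩
      · obtain ⟨a, b, -, hs⟩ := Set.ncard_eq_two.mp heq
        exact ⟨a, b, hs⟩
    have hp1C : p1 ∈ C := by
      have : p1 ∈ C ∩ f ⁻¹' {q} := by rw [hP]; exact Set.mem_insert _ _
      exact this.1
    have hp2C : p2 ∈ C := by
      have : p2 ∈ C ∩ f ⁻¹' {q} := by
        rw [hP]; exact Set.mem_insert_of_mem _ rfl
      exact this.1
    obtain ⟨A, B, hA, hB, hAB⟩ := circle_compl_pair (h ⟨p1, hp1C⟩) (h ⟨p2, hp2C⟩)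
    have hunion : f '' (Subtype.val '' (h ⁻¹' A)) ∪ f '' (Subtype.val '' (h ⁻¹' B))
        = (f '' C) \ {q} := by
      rw [← Set.image_union, ← Set.image_union, ← Set.preimage_union, hAB,
        hCset p1 hp1C p2 hp2C, himg q {p1, p2} hP.symm]
    have := cc_card_le_two ((hpre A hA).image f φ.continuous.continuousOn)
      ((hpre B hB).image f φ.continuous.continuousOn) hunion
    omega
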